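/- arXiv:1705.07032 — 4 statements merged into one kernel-verified Lean document; each statement's English description precedes it below -/
import Mathlib

section
/- Let [·|·] be a semi-inner product on X. The following conditions are equivalent: (i) for all x,y ∈ X, ρ*(x,y) = 0 if and only if [y|x] = 0; (ii) for all x,y ∈ X, ρ*(x,y) = 0 implies [y|x] = 0; (iii) ρ*(x,y) = [y|x]² for all x,y ∈ X. -/
open Filter Topology

/-- The norm derivative `ρ₊(x,y) = lim_{t→0⁺} (‖x+ty‖² − ‖x‖²)/(2t)`. -/
noncomputable def rhoPlus {X : Type*} [NormedAddCommGroup X] [NormedSpace ℝ X] (x y : X) : ℝ :=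
  limUnder (𝓝[>] (0 : ℝ)) (fun t : ℝ => (‖x + t • y‖ ^ 2 - ‖x‖ ^ 2) / (2 * t))

/-- The norm derivative `ρ₋(x,y) = lim_{t→0⁻} (‖x+ty‖² − ‖x‖²)/(2t)`. -/
noncomputable def rhoMinus {X : Type*} [NormedAddCommGroup X] [NormedSpace ℝ X] (x y : X) : ℝ :=
  limUnder (𝓝[<] (0 : ℝ)) (fun t : ℝ => (‖x + t • y‖ ^ 2 - ‖x‖ ^ 2) / (2 * t))

/-- `ρ*(x,y) := ρ₋(x,y)·ρ₊(x,y)`. -/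
noncomputable def rhoStar {X : Type*} [NormedAddCommGroup X] [NormedSpace ℝ X] (x y : X) : ℝ :=
  rhoMinus x y * rhoPlus x y
/-- A semi-inner product on a real normed space `X`. -/
structure SemiInnerProduct (X : Type*) [NormedAddCommGroup X] [NormedSpace ℝ X] where
  toFun : X → X → ℝ
  linear_left : ∀ (r t : ℝ) (x y z : X),
    toFun (r • x + t • y) z = r * toFun x z + t * toFun y z
  norm_sq : ∀ x : X, toFun x x = ‖x‖ ^ 2
  abs_le : ∀ x y : X, |toFun x y| ≤ ‖x‖ * ‖y‖

/-!
Replacing `y` by `y + s • x` adds `s‖x‖²` to each of `ρ₊(x,y)`, `ρ₋(x,y)` and `[y|x]`: for `ρ₊`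
this is the reparametrization `x + t(y + s x) = (1 + ts)(x + u y)` with `u = t / (1 + ts)`. So if
every zero of `ρ*` is a zero of `[·|x]`, moving `y` along `x` onto a zero of `ρ₊(x,·)` shows
`[y|x] = ρ₊(x,y)`, and likewise `[y|x] = ρ₋(x,y)`; hence `ρ*(x,y) = [y|x]²`.
-/

open Set

section NormDerivative

variable {X : Type*} [NormedAddCommGroup X] [NormedSpace ℝ X]

theorem convexOn_norm_add_smul_sq (x y : X) :
    ConvexOn ℝ univ (fun t : ℝ => ‖x + t • y‖ ^ 2) := by
  have hnorm : ConvexOn ℝ univ (fun t : ℝ => ‖x + t • y‖) := by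
    have h := convexOn_univ_norm.comp_affineMap (AffineMap.lineMap x (x + y) : ℝ →ᵃ[ℝ] X)
    simpa [Function.comp_def, AffineMap.lineMap_apply_module', add_comm] using h
  exact hnorm.pow (fun _ _ => norm_nonneg _) 2

/-- The difference quotient is half the secant slope at `0` of the convex function
`t ↦ ‖x + t • y‖²`, hence monotone, and bounded below on `t > 0` by its value at `t = -1`. -/
theorem tendsto_rhoPlus (x y : X) :
    Tendsto (fun t : ℝ => (‖x + t • y‖ ^ 2 - ‖x‖ ^ 2) / (2 * t)) (𝓝[>] 0)
      (𝓝 (rhoPlus x y)) := by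
  set secant : ℝ → ℝ := fun t => (‖x + t • y‖ ^ 2 - ‖x + (0 : ℝ) • y‖ ^ 2) / (t - 0)
  have hconv := convexOn_norm_add_smul_sq x y
  have hmono : MonotoneOn secant (Ioi 0) := fun a ha b hb hab =>
    hconv.secant_mono (mem_univ 0) (mem_univ a) (mem_univ b) ha.ne' hb.ne' hab
  have hbdd : BddBelow (secant '' Ioi 0) := by
    refine ⟨secant (-1), ?_⟩
    rintro _ ⟨t, ht, rfl⟩
    exact hconv.secant_mono (mem_univ 0) (mem_univ (-1)) (mem_univ t) (by norm_num) ht.ne'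
      (by linarith [mem_Ioi.mp ht])
  have hlim : Tendsto (fun t => (‖x + t • y‖ ^ 2 - ‖x‖ ^ 2) / (2 * t)) (𝓝[>] 0)
      (𝓝 (sInf (secant '' Ioi 0) / 2)) := by
    refine ((hmono.tendsto_nhdsGT hbdd).div_const 2).congr fun t => ?_
    simp only [secant, zero_smul, add_zero, sub_zero, div_div, mul_comm t]
  rwa [rhoPlus, hlim.limUnder_eq]

theorem rhoMinus_eq_neg_rhoPlus_neg (x y : X) : rhoMinus x y = -rhoPlus x (-y) := by
  have hneg : Tendsto Neg.neg (𝓝[<] (0 : ℝ)) (𝓝[>] 0) := by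
    simpa using tendsto_neg_nhdsLT (a := (0 : ℝ))
  have hlim : Tendsto (fun t : ℝ => (‖x + t • y‖ ^ 2 - ‖x‖ ^ 2) / (2 * t)) (𝓝[<] 0)
      (𝓝 (-rhoPlus x (-y))) := by
    refine ((tendsto_rhoPlus x (-y)).comp hneg).neg.congr fun t => ?_
    simp only [Function.comp_def, smul_neg, neg_smul, neg_neg, mul_neg, div_neg]
  exact hlim.limUnder_eq

theorem tendsto_one_add_mul_nhdsGT (s : ℝ) :
    Tendsto (fun t : ℝ => 1 + t * s) (𝓝[>] 0) (𝓝 1) :=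
  ((by fun_prop : Continuous fun t : ℝ => 1 + t * s).tendsto' 0 1 (by simp)).mono_left
    nhdsWithin_le_nhds

theorem tendsto_div_one_add_mul_nhdsGT (s : ℝ) :
    Tendsto (fun t : ℝ => t / (1 + t * s)) (𝓝[>] 0) (𝓝[>] 0) := by
  have hden := tendsto_one_add_mul_nhdsGT s
  refine tendsto_nhdsWithin_iff.mpr ⟨?_, ?_⟩
  · have h := (tendsto_nhdsWithin_of_tendsto_nhds tendsto_id).div hden one_ne_zero
    rw [zero_div] at h
    exact h
  · filter_upwards [self_mem_nhdsWithin, hden.eventually (eventually_gt_nhds one_pos)]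
      with t (ht : 0 < t) hpos
    exact div_pos ht hpos

theorem rhoPlus_add_smul_self (x y : X) (s : ℝ) :
    rhoPlus x (y + s • x) = rhoPlus x y + s * ‖x‖ ^ 2 := by
  set u : ℝ → ℝ := fun t => t / (1 + t * s)
  have hden := tendsto_one_add_mul_nhdsGT s
  have hrest : Tendsto (fun t : ℝ => (s + t * s ^ 2 / 2) * ‖x‖ ^ 2) (𝓝[>] 0)
      (𝓝 (s * ‖x‖ ^ 2)) := by
    have : Tendsto (fun t : ℝ => (s + t * s ^ 2 / 2) * ‖x‖ ^ 2) (𝓝 0)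
        (𝓝 ((s + 0 * s ^ 2 / 2) * ‖x‖ ^ 2)) := by
      apply Continuous.tendsto; fun_prop
    simpa using this.mono_left nhdsWithin_le_nhds
  have hlim : Tendsto (fun t : ℝ => (‖x + t • (y + s • x)‖ ^ 2 - ‖x‖ ^ 2) / (2 * t))
      (𝓝[>] 0) (𝓝 (1 * rhoPlus x y + s * ‖x‖ ^ 2)) := by
    refine ((hden.mul ((tendsto_rhoPlus x y).comp (tendsto_div_one_add_mul_nhdsGT s))).add
      hrest).congr' ?_
    filter_upwards [self_mem_nhdsWithin, hden.eventually (eventually_gt_nhds one_pos)]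
      with t (ht : 0 < t) hpos
    have hvec : x + t • (y + s • x) = (1 + t * s) • (x + u t • y) := by
      simp only [u]
      match_scalars <;> field_simp
    have hnorm : ‖x + t • (y + s • x)‖ ^ 2 = (1 + t * s) ^ 2 * ‖x + u t • y‖ ^ 2 := by
      rw [hvec, norm_smul, mul_pow, Real.norm_eq_abs, sq_abs]
    have hu : u t ≠ 0 := div_ne_zero ht.ne' hpos.ne'
    rw [hnorm]
    simp only [Function.comp_apply, u] at hu ⊢
    field_simp
    ring
  rw [rhoPlus, hlim.limUnder_eq, one_mul]

theorem rhoMinus_add_smul_self (x y : X) (s : ℝ) :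
    rhoMinus x (y + s • x) = rhoMinus x y + s * ‖x‖ ^ 2 := by
  rw [rhoMinus_eq_neg_rhoPlus_neg, rhoMinus_eq_neg_rhoPlus_neg, neg_add, ← neg_smul,
    rhoPlus_add_smul_self]
  ring

theorem rhoPlus_zero_left (y : X) : rhoPlus (0 : X) y = 0 := by
  have hlim : Tendsto (fun t : ℝ => t * ‖y‖ ^ 2 / 2) (𝓝[>] 0) (𝓝 0) := by
    have : Tendsto (fun t : ℝ => t * ‖y‖ ^ 2 / 2) (𝓝 0) (𝓝 (0 * ‖y‖ ^ 2 / 2)) := by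
      apply Continuous.tendsto; fun_prop
    simpa using this.mono_left nhdsWithin_le_nhds
  refine (hlim.congr' ?_).limUnder_eq
  filter_upwards [self_mem_nhdsWithin] with t (ht : 0 < t)
  rw [zero_add, norm_zero, norm_smul, mul_pow, Real.norm_eq_abs, sq_abs]
  field_simp [ht.ne']
  ring

theorem rhoMinus_zero_left (y : X) : rhoMinus (0 : X) y = 0 := by
  rw [rhoMinus_eq_neg_rhoPlus_neg, rhoPlus_zero_left, neg_zero]

end NormDerivative

namespace SemiInnerProduct

variable {X : Type*} [NormedAddCommGroup X] [NormedSpace ℝ X] (sip : SemiInnerProduct X)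

theorem apply_zero_right (y : X) : sip.toFun y 0 = 0 :=
  abs_nonpos_iff.mp (by simpa using sip.abs_le y 0)

theorem apply_add_smul_self (x y : X) (s : ℝ) :
    sip.toFun (y + s • x) x = sip.toFun y x + s * ‖x‖ ^ 2 := by
  simpa [sip.norm_sq] using sip.linear_left 1 s y x x

theorem apply_eq_of_zero_imp {x : X} (hx : x ≠ 0) {f : X → ℝ}
    (hf : ∀ y (s : ℝ), f (y + s • x) = f y + s * ‖x‖ ^ 2)
    (hzero : ∀ y, f y = 0 → sip.toFun y x = 0) (y : X) : sip.toFun y x = f y := by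
  have hx2 : ‖x‖ ^ 2 ≠ 0 := by positivity
  have hroot : f (y + (-f y / ‖x‖ ^ 2) • x) = 0 := by
    rw [hf]
    field_simp
    ring
  have := hzero _ hroot
  rw [apply_add_smul_self] at this
  field_simp at this
  linarith

theorem rhoStar_eq_sq_of_rhoStar_eq_zero_imp
    (h : ∀ x y : X, rhoStar x y = 0 → sip.toFun y x = 0) (x y : X) :
    rhoStar x y = sip.toFun y x ^ 2 := by
  rcases eq_or_ne x 0 with rfl | hx
  · simp [rhoStar, rhoPlus_zero_left, rhoMinus_zero_left, apply_zero_right]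
  have hplus := sip.apply_eq_of_zero_imp hx (rhoPlus_add_smul_self x)
    (fun z hz => h x z (by rw [rhoStar, hz, mul_zero])) y
  have hminus := sip.apply_eq_of_zero_imp hx (rhoMinus_add_smul_self x)
    (fun z hz => h x z (by rw [rhoStar, hz, zero_mul])) y
  rw [rhoStar, ← hplus, ← hminus, sq]

end SemiInnerProduct

theorem rhoStar_eq_sip_tfae_general {X : Type*} [NormedAddCommGroup X] [NormedSpace ℝ X]
    (sip : SemiInnerProduct X) :
    List.TFAE
      [ ∀ x y : X, rhoStar x y = 0 ↔ sip.toFun y x = 0,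
        ∀ x y : X, rhoStar x y = 0 → sip.toFun y x = 0,
        ∀ x y : X, rhoStar x y = (sip.toFun y x) ^ 2 ] := by
  tfae_have 1 → 2 := fun h x y => (h x y).mp
  tfae_have 2 → 3 := sip.rhoStar_eq_sq_of_rhoStar_eq_zero_imp
  tfae_have 3 → 1 := fun h x y => by rw [h, sq_eq_zero_iff]
  tfae_finish

theorem rhoStar_eq_sip_tfae {X : Type*} [NormedAddCommGroup X] [NormedSpace ℝ X]
    (hdim : 2 ≤ Module.rank ℝ X) (sip : SemiInnerProduct X) :
    List.TFAE
      [ ∀ x y : X, rhoStar x y = 0 ↔ sip.toFun y x = 0,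
        ∀ x y : X, rhoStar x y = 0 → sip.toFun y x = 0,
        ∀ x y : X, rhoStar x y = (sip.toFun y x) ^ 2 ] :=
  rhoStar_eq_sip_tfae_general sip
end

section
/- Let X be a real normed space of dimension at least 2 and T : X → X a nonzero linear mapping satisfying ‖Tx‖ = ‖T‖·‖x‖ for all x ∈ X (where ‖T‖ is the operator norm). Then there exists a semi-inner product [·|·] : X × X → ℝ such that [Tx|Ty] = ‖T‖²·[x|y] for all x,y ∈ X. -/
/-!
By Hahn–Banach, `s x y = ‖y‖ * g_y x` with `g_y` a norming functional of `y` is a semi-inner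
product. Semi-inner products form a convex set which is compact for pointwise convergence, and
if `‖T x‖ = k * ‖x‖` with `k ≠ 0`, then `s ↦ k⁻² * s (T ·) (T ·)` maps this set into itself.
A cluster point of the Cesàro averages of an orbit of this map is a fixed point (Markov–Kakutani
for a single map), i.e. a semi-inner product with `s (T x) (T y) = k² * s x y`.
-/

open Filter Topology

/-- The operator norm of a linear map: the supremum of `‖T x‖` over the unit sphere. -/
noncomputable def opNorm {X Y : Type*} [NormedAddCommGroup X] [NormedSpace ℝ X]
    [NormedAddCommGroup Y] [NormedSpace ℝ Y] (T : X →ₗ[ℝ] Y) : ℝ :=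
  sSup {c : ℝ | ∃ x : X, ‖x‖ = 1 ∧ c = ‖T x‖}

theorem LinearMap.exists_isFixedPt_of_mapsTo_of_isCompact_of_convex
    {E : Type*} [AddCommGroup E] [Module ℝ E] [TopologicalSpace E] [IsTopologicalAddGroup E]
    [ContinuousSMul ℝ E] [T2Space E] (P : E →ₗ[ℝ] E) (hP : Continuous P) {K : Set E}
    (hK : IsCompact K) (hKc : Convex ℝ K) (hne : K.Nonempty) (hPK : Set.MapsTo P K K) :
    ∃ p ∈ K, Function.IsFixedPt P p := by
  obtain ⟨x₀, hx₀⟩ := hne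
  set ε : ℕ → ℝ := fun n => ((n : ℝ) + 1)⁻¹
  set A : ℕ → E := fun n => ε n • ∑ j ∈ Finset.range (n + 1), (P ^ j) x₀
  have horbit : ∀ j, (P ^ j) x₀ ∈ K := fun j => by
    rw [Module.End.pow_apply]
    exact hPK.iterate j hx₀
  have hA : ∀ n, A n ∈ K := fun n => by
    simp only [A, Finset.smul_sum]
    refine hKc.sum_mem (fun _ _ => by positivity) ?_ fun j _ => horbit j
    simp only [Finset.sum_const, Finset.card_range, nsmul_eq_mul, ε]
    push_cast
    exact mul_inv_cancel₀ (by positivity)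
  have hPA : ∀ n, P (A n) - A n = ε n • (P ^ (n + 1)) x₀ - ε n • x₀ := fun n => by
    simp only [A, map_smul, map_sum, ← smul_sub, ← Finset.sum_sub_distrib, ← Module.End.mul_apply,
      ← pow_succ', Finset.sum_range_sub (fun j => (P ^ j) x₀), pow_zero, Module.End.one_apply]
  have hε : Tendsto ε atTop (𝓝 0) :=
    tendsto_one_div_add_atTop_nhds_zero_nat.congr fun n => one_div _
  have hdefect : Tendsto (fun n => P (A n) - A n) atTop (𝓝 0) := by
    simp only [hPA]
    simpa using ((hK.isVonNBounded ℝ).smul_tendsto_zero (.of_forall fun n => horbit (n + 1)) hε).sub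
      (hε.smul_const x₀)
  obtain ⟨p, hpK, hp⟩ := hK.ultrafilter_le_nhds ((Ultrafilter.of atTop).map A)
    (le_principal_iff.mpr (Ultrafilter.mem_map.mpr (univ_mem' hA)))
  refine ⟨p, hpK, sub_eq_zero.mp (tendsto_nhds_unique ?_ (hdefect.mono_left (Ultrafilter.of_le _)))⟩
  exact ((hP.tendsto p).comp hp).sub hp

section SemiInnerProduct

variable {X : Type*} [NormedAddCommGroup X] [NormedSpace ℝ X]

structure IsSemiInnerProduct (s : X → X → ℝ) : Prop where
  add_smul_left : ∀ (r t : ℝ) (x y z : X), s (r • x + t • y) z = r * s x z + t * s y z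
  self : ∀ x : X, s x x = ‖x‖ ^ 2
  abs_le : ∀ x y : X, |s x y| ≤ ‖x‖ * ‖y‖

theorem exists_isSemiInnerProduct : ∃ s : X → X → ℝ, IsSemiInnerProduct s := by
  choose g hg_norm hg_apply using fun y : X => exists_dual_vector'' ℝ y
  refine ⟨fun x y => ‖y‖ * g y x, ⟨fun r t x y z => ?_, fun x => ?_, fun x y => ?_⟩⟩
  · simp only [map_add, map_smul, smul_eq_mul]
    ring
  · rw [hg_apply, RCLike.ofReal_real_eq_id, id, sq]
  · rw [abs_mul, abs_norm, mul_comm ‖x‖]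
    gcongr
    calc |g y x| = ‖g y x‖ := (Real.norm_eq_abs _).symm
      _ ≤ ‖g y‖ * ‖x‖ := (g y).le_opNorm x
      _ ≤ ‖x‖ := mul_le_of_le_one_left (norm_nonneg x) (hg_norm y)

theorem convex_setOf_isSemiInnerProduct : Convex ℝ {s : X → X → ℝ | IsSemiInnerProduct s} := by
  intro s hs s' hs' a b ha hb hab
  refine ⟨fun r t x y z => ?_, fun x => ?_, fun x y => ?_⟩
  · simp only [Pi.add_apply, Pi.smul_apply, smul_eq_mul, hs.add_smul_left, hs'.add_smul_left]
    ring
  · simp only [Pi.add_apply, Pi.smul_apply, smul_eq_mul, hs.self, hs'.self]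
    rw [← add_mul, hab, one_mul]
  · simp only [Pi.add_apply, Pi.smul_apply, smul_eq_mul]
    calc |a * s x y + b * s' x y| ≤ a * |s x y| + b * |s' x y| := by
          refine (abs_add_le _ _).trans ?_
          rw [abs_mul, abs_mul, abs_of_nonneg ha, abs_of_nonneg hb]
      _ ≤ a * (‖x‖ * ‖y‖) + b * (‖x‖ * ‖y‖) := by
          gcongr
          exacts [hs.abs_le x y, hs'.abs_le x y]
      _ = ‖x‖ * ‖y‖ := by rw [← add_mul, hab, one_mul]

theorem isClosed_setOf_isSemiInnerProduct :
    IsClosed {s : X → X → ℝ | IsSemiInnerProduct s} := by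
  have hset : {s : X → X → ℝ | IsSemiInnerProduct s} =
      (⋂ (r : ℝ) (t : ℝ) (x : X) (y : X) (z : X),
        {s | s (r • x + t • y) z = r * s x z + t * s y z}) ∩
      (⋂ x : X, {s | s x x = ‖x‖ ^ 2}) ∩ ⋂ (x : X) (y : X), {s | |s x y| ≤ ‖x‖ * ‖y‖} := by
    ext s
    simp only [Set.mem_ofPred_eq, Set.mem_inter_iff, Set.mem_iInter]
    exact ⟨fun ⟨h₁, h₂, h₃⟩ => ⟨⟨h₁, h₂⟩, h₃⟩, fun ⟨⟨h₁, h₂⟩, h₃⟩ => ⟨h₁, h₂, h₃⟩⟩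
  rw [hset]
  refine ((isClosed_iInter fun r => isClosed_iInter fun t => isClosed_iInter fun x =>
    isClosed_iInter fun y => isClosed_iInter fun z => isClosed_eq (by fun_prop) (by fun_prop)).inter
    (isClosed_iInter fun x => isClosed_eq (by fun_prop) (by fun_prop))).inter
    (isClosed_iInter fun x => isClosed_iInter fun y => isClosed_le (by fun_prop) (by fun_prop))

theorem isCompact_setOf_isSemiInnerProduct :
    IsCompact {s : X → X → ℝ | IsSemiInnerProduct s} := by
  refine (isCompact_univ_pi fun x => isCompact_univ_pi fun y =>
    isCompact_Icc (a := -(‖x‖ * ‖y‖)) (b := ‖x‖ * ‖y‖)).of_isClosed_subset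
    isClosed_setOf_isSemiInnerProduct fun s hs => ?_
  simp only [Set.mem_univ_pi, Set.mem_Icc]
  exact fun x y => abs_le.mp (hs.abs_le x y)

theorem IsSemiInnerProduct.comp_similarity {s : X → X → ℝ} (hs : IsSemiInnerProduct s)
    {T : X →ₗ[ℝ] X} {k : ℝ} (hT : ∀ x, ‖T x‖ = k * ‖x‖) (hk : k ≠ 0) :
    IsSemiInnerProduct fun x y => (k ^ 2)⁻¹ * s (T x) (T y) := by
  refine ⟨fun r t x y z => ?_, fun x => ?_, fun x y => ?_⟩
  · simp only [map_add, map_smul, hs.add_smul_left]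
    ring
  · rw [hs.self, hT]
    field_simp
  · rw [abs_mul, abs_inv, abs_of_nonneg (sq_nonneg k)]
    calc (k ^ 2)⁻¹ * |s (T x) (T y)| ≤ (k ^ 2)⁻¹ * (‖T x‖ * ‖T y‖) := by
          gcongr
          exact hs.abs_le _ _
      _ = ‖x‖ * ‖y‖ := by
          rw [hT, hT]
          field_simp

def scaledPrecomp (T : X →ₗ[ℝ] X) (c : ℝ) : (X → X → ℝ) →ₗ[ℝ] X → X → ℝ where
  toFun s x y := c * s (T x) (T y)
  map_add' s s' := by
    ext x y
    exact mul_add c _ _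
  map_smul' a s := by
    ext x y
    exact mul_left_comm c a _

theorem continuous_scaledPrecomp (T : X →ₗ[ℝ] X) (c : ℝ) : Continuous (scaledPrecomp T c) :=
  continuous_pi fun x => continuous_pi fun y => continuous_const.mul (by fun_prop)

theorem exists_isSemiInnerProduct_apply_map_map {T : X →ₗ[ℝ] X} {k : ℝ}
    (hT : ∀ x, ‖T x‖ = k * ‖x‖) :
    ∃ s, IsSemiInnerProduct s ∧ ∀ x y, s (T x) (T y) = k ^ 2 * s x y := by
  rcases eq_or_ne k 0 with rfl | hk
  · obtain ⟨s, hs⟩ := exists_isSemiInnerProduct (X := X)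
    have hT0 : ∀ x, T x = 0 := fun x => norm_eq_zero.mp (by rw [hT, zero_mul])
    refine ⟨s, hs, fun x y => ?_⟩
    rw [hT0, hT0, hs.self, norm_zero]
    ring
  · obtain ⟨s, hs, hfix⟩ :=
      (scaledPrecomp T (k ^ 2)⁻¹).exists_isFixedPt_of_mapsTo_of_isCompact_of_convex
      (continuous_scaledPrecomp T _) isCompact_setOf_isSemiInnerProduct
      convex_setOf_isSemiInnerProduct exists_isSemiInnerProduct
      fun s hs => hs.comp_similarity hT hk
    refine ⟨s, hs, fun x y => ?_⟩
    have hxy : (k ^ 2)⁻¹ * s (T x) (T y) = s x y := congr_fun (congr_fun hfix x) y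
    rw [← hxy, mul_inv_cancel_left₀ (pow_ne_zero 2 hk)]

end SemiInnerProduct

theorem exists_sip_of_similarity_general {X : Type*} [NormedAddCommGroup X] [NormedSpace ℝ X]
    (T : X →ₗ[ℝ] X)
    (hsim : ∀ x : X, ‖T x‖ = opNorm T * ‖x‖) :
    ∃ sip : X → X → ℝ,
      (∀ (r t : ℝ) (x y z : X), sip (r • x + t • y) z = r * sip x z + t * sip y z) ∧
      (∀ x : X, sip x x = ‖x‖ ^ 2) ∧
      (∀ x y : X, |sip x y| ≤ ‖x‖ * ‖y‖) ∧
      (∀ x y : X, sip (T x) (T y) = opNorm T ^ 2 * sip x y) := by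
  obtain ⟨s, hs, hsT⟩ := exists_isSemiInnerProduct_apply_map_map hsim
  exact ⟨s, hs.add_smul_left, hs.self, hs.abs_le, hsT⟩

theorem exists_sip_of_similarity {X : Type*} [NormedAddCommGroup X] [NormedSpace ℝ X]
    (hdim : 2 ≤ Module.rank ℝ X) (T : X →ₗ[ℝ] X) (hT : T ≠ 0)
    (hsim : ∀ x : X, ‖T x‖ = opNorm T * ‖x‖) :
    ∃ sip : X → X → ℝ,
      (∀ (r t : ℝ) (x y z : X), sip (r • x + t • y) z = r * sip x z + t * sip y z) ∧
      (∀ x : X, sip x x = ‖x‖ ^ 2) ∧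
      (∀ x y : X, |sip x y| ≤ ‖x‖ * ‖y‖) ∧
      (∀ x y : X, sip (T x) (T y) = opNorm T ^ 2 * sip x y) :=
  exists_sip_of_similarity_general T hsim
end

section
/- Suppose Y is a real normed space that is strictly convex and there exists a nonzero linear mapping T : X → Y such that for all x,y ∈ X, x ⊥_{ρ*} y implies Tx ⊥_{ρ*} Ty. Then X is strictly convex. Likewise, if Y is an inner product space (its norm is induced by an inner product) and such a T exists, then X is an inner product space. -/
open Filter Topology

/-!
`ρ₊(x, y)` and `ρ₋(x, y)` are the one-sided derivatives at `0` of the convex function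
`t ↦ ‖x + t • y‖² / 2`, and `ρ±(x, a • x + y) = a ‖x‖² + ρ±(x, y)`, so every `y` becomes
`ρ*`-orthogonal to a given `x ≠ 0` after adding a suitable multiple of `x`. Feeding such pairs to
`T` shows that `T` is injective and, when `Y` is an inner product space (where `ρ± = ⟪·, ·⟫`), that
`⟪T x, T y⟫ ‖x‖² = ρ±(x, y) ‖T x‖²`.

If `X` is not strictly convex, some chord of its unit sphere lies on the sphere. Then `ρ*` vanishes
along the chord, hence along its image under `T`, so the image has endpoints and midpoint of equal
norm, which strict convexity of `Y` forbids.

In the inner product case the identity above shows that the norm of `X` is smooth and that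
`w ↦ ‖T w‖² / ‖w‖²` is constant on lines avoiding `0`. So `T` is a multiple of an isometry, and `X`
inherits the parallelogram law of `Y`.
-/

open Set

section NormDerivatives

variable {X : Type*} [NormedAddCommGroup X] [NormedSpace ℝ X]

noncomputable def rhoQuot (x y : X) (t : ℝ) : ℝ := (‖x + t • y‖ ^ 2 - ‖x‖ ^ 2) / (2 * t)

theorem rhoQuot_add_smul (x y : X) (s t : ℝ) :
    rhoQuot (x + s • y) y (t - s) = slope (fun r : ℝ => ‖x + r • y‖ ^ 2) s t / 2 := by
  rw [rhoQuot, slope_def_field, add_assoc, ← add_smul, add_sub_cancel, div_div, mul_comm]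

theorem rhoQuot_eq_slope (x y : X) (t : ℝ) :
    rhoQuot x y t = slope (fun r : ℝ => ‖x + r • y‖ ^ 2) 0 t / 2 := by
  simpa using rhoQuot_add_smul x y 0 t

theorem rhoQuot_mono (x y : X) {s t : ℝ} (hs : s ≠ 0) (ht : t ≠ 0) (hst : s ≤ t) :
    rhoQuot x y s ≤ rhoQuot x y t := by
  rw [rhoQuot_eq_slope, rhoQuot_eq_slope, slope_def_field, slope_def_field]
  gcongr ?_ / 2
  exact (convexOn_norm_add_smul_sq x y).secant_mono (mem_univ 0) (mem_univ s) (mem_univ t)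
    hs ht hst

theorem tendsto_rhoQuot_rhoPlus (x y : X) :
    Tendsto (rhoQuot x y) (𝓝[>] 0) (𝓝 (rhoPlus x y)) := by
  have hmono : MonotoneOn (rhoQuot x y) (Ioi 0) := fun s hs t ht hst =>
    rhoQuot_mono x y (ne_of_gt hs) (ne_of_gt ht) hst
  have hbdd : BddBelow (rhoQuot x y '' Ioi 0) :=
    ⟨rhoQuot x y (-1), forall_mem_image.2 fun t ht =>
      rhoQuot_mono x y (by norm_num) (ne_of_gt ht) (by linarith [mem_Ioi.1 ht])⟩
  have h := hmono.tendsto_nhdsGT hbdd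
  rwa [show rhoPlus x y = _ from h.limUnder_eq]

theorem tendsto_rhoQuot_rhoMinus (x y : X) :
    Tendsto (rhoQuot x y) (𝓝[<] 0) (𝓝 (rhoMinus x y)) := by
  have hmono : MonotoneOn (rhoQuot x y) (Iio 0) := fun s hs t ht hst =>
    rhoQuot_mono x y (ne_of_lt hs) (ne_of_lt ht) hst
  have hbdd : BddAbove (rhoQuot x y '' Iio 0) :=
    ⟨rhoQuot x y 1, forall_mem_image.2 fun t ht =>
      rhoQuot_mono x y (ne_of_lt ht) (by norm_num) (by linarith [mem_Iio.1 ht])⟩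
  have h := hmono.tendsto_nhdsLT hbdd
  rwa [show rhoMinus x y = _ from h.limUnder_eq]

theorem rhoPlus_le_rhoQuot (x y : X) {t : ℝ} (ht : 0 < t) : rhoPlus x y ≤ rhoQuot x y t :=
  le_of_tendsto (tendsto_rhoQuot_rhoPlus x y) <| by
    filter_upwards [Ioo_mem_nhdsGT ht] with s hs
    exact rhoQuot_mono x y hs.1.ne' ht.ne' hs.2.le

theorem rhoQuot_le_rhoMinus (x y : X) {t : ℝ} (ht : t < 0) : rhoQuot x y t ≤ rhoMinus x y :=
  ge_of_tendsto (tendsto_rhoQuot_rhoMinus x y) <| by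
    filter_upwards [Ioo_mem_nhdsLT ht] with s hs
    exact rhoQuot_mono x y ht.ne hs.2.ne hs.1.le

theorem rhoMinus_le_rhoPlus (x y : X) : rhoMinus x y ≤ rhoPlus x y :=
  ge_of_tendsto (tendsto_rhoQuot_rhoPlus x y) <| by
    filter_upwards [self_mem_nhdsWithin] with t ht
    exact le_of_tendsto (tendsto_rhoQuot_rhoMinus x y) <| by
      filter_upwards [self_mem_nhdsWithin] with s hs
      exact rhoQuot_mono x y (ne_of_lt hs) (ne_of_gt ht) (hs.out.le.trans ht.out.le)

theorem rhoPlus_eq_of_eventually_rhoQuot_eq {x y : X} {c : ℝ}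
    (h : ∀ᶠ t in 𝓝[>] 0, rhoQuot x y t = c) : rhoPlus x y = c :=
  tendsto_nhds_unique (tendsto_rhoQuot_rhoPlus x y) (tendsto_const_nhds.congr' (h.mono
    fun _ ht => ht.symm))

theorem rhoMinus_eq_of_eventually_rhoQuot_eq {x y : X} {c : ℝ}
    (h : ∀ᶠ t in 𝓝[<] 0, rhoQuot x y t = c) : rhoMinus x y = c :=
  tendsto_nhds_unique (tendsto_rhoQuot_rhoMinus x y) (tendsto_const_nhds.congr' (h.mono
    fun _ ht => ht.symm))

theorem rhoPlus_zero_right (x : X) : rhoPlus x 0 = 0 :=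
  rhoPlus_eq_of_eventually_rhoQuot_eq (Eventually.of_forall fun t => by simp [rhoQuot])

/-- Rescaling `x + t • (a • x + y) = (1 + t * a) • (x + s • y)` with `s = t / (1 + t * a)`
turns the difference quotient in direction `a • x + y` into the one in direction `y`. -/
theorem rhoPlus_smul_add (x y : X) (a : ℝ) :
    rhoPlus x (a • x + y) = a * ‖x‖ ^ 2 + rhoPlus x y := by
  have hcont : Continuous fun t : ℝ => 1 + t * a := by fun_prop
  have hpos : ∀ᶠ t in 𝓝[>] (0 : ℝ), 0 < t ∧ 0 < 1 + t * a := by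
    filter_upwards [self_mem_nhdsWithin, nhdsWithin_le_nhds
      (hcont.continuousAt.eventually (lt_mem_nhds (by simp : (0 : ℝ) < 1 + 0 * a)))] with t ht h1
    exact ⟨ht, h1⟩
  have hs : Tendsto (fun t : ℝ => t / (1 + t * a)) (𝓝[>] 0) (𝓝[>] 0) := by
    refine tendsto_nhdsWithin_iff.2 ⟨?_, hpos.mono fun t ht => div_pos ht.1 ht.2⟩
    have h : Tendsto (fun t : ℝ => t / (1 + t * a)) (𝓝 0) (𝓝 (0 / (1 + 0 * a))) :=
      tendsto_id.div (hcont.tendsto 0) (by simp)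
    simpa using h.mono_left nhdsWithin_le_nhds
  have hquot : ∀ᶠ t in 𝓝[>] (0 : ℝ), rhoQuot x (a • x + y) t =
      (1 + t * a) * rhoQuot x y (t / (1 + t * a)) + (a + t * a ^ 2 / 2) * ‖x‖ ^ 2 := by
    filter_upwards [hpos] with t ⟨ht, h1⟩
    have hvec : x + t • (a • x + y) = (1 + t * a) • (x + (t / (1 + t * a)) • y) := by
      rw [smul_add (1 + t * a), smul_smul, mul_div_cancel₀ _ h1.ne']
      module
    rw [rhoQuot, rhoQuot, hvec, norm_smul, Real.norm_of_nonneg h1.le]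
    field_simp
    ring
  have hlim : Tendsto (fun t : ℝ => (1 + t * a) * rhoQuot x y (t / (1 + t * a)) +
      (a + t * a ^ 2 / 2) * ‖x‖ ^ 2) (𝓝[>] 0)
      (𝓝 ((1 + 0 * a) * rhoPlus x y + (a + 0 * a ^ 2 / 2) * ‖x‖ ^ 2)) :=
    (((hcont.tendsto 0).mono_left nhdsWithin_le_nhds).mul
      ((tendsto_rhoQuot_rhoPlus x y).comp hs)).add
      (((Continuous.tendsto (by fun_prop) 0).mono_left nhdsWithin_le_nhds).mul_const _)
  rw [tendsto_nhds_unique (tendsto_rhoQuot_rhoPlus x (a • x + y))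
    (hlim.congr' (hquot.mono fun _ ht => ht.symm))]
  ring

theorem rhoMinus_smul_add (x y : X) (a : ℝ) :
    rhoMinus x (a • x + y) = a * ‖x‖ ^ 2 + rhoMinus x y := by
  rw [rhoMinus_eq_neg_rhoPlus_neg, rhoMinus_eq_neg_rhoPlus_neg, neg_add, ← neg_smul,
    rhoPlus_smul_add]
  ring

theorem rhoPlus_eq_of_hasDerivAt {x y : X} {D : ℝ}
    (h : HasDerivAt (fun t : ℝ => ‖x + t • y‖ ^ 2) D 0) : rhoPlus x y = D / 2 := by
  rw [hasDerivAt_iff_tendsto_slope] at h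
  refine tendsto_nhds_unique (tendsto_rhoQuot_rhoPlus x y) ?_
  rw [funext (rhoQuot_eq_slope x y)]
  exact (h.div_const 2).mono_left (nhdsGT_le_nhdsNE 0)

theorem rhoMinus_eq_of_hasDerivAt {x y : X} {D : ℝ}
    (h : HasDerivAt (fun t : ℝ => ‖x + t • y‖ ^ 2) D 0) : rhoMinus x y = D / 2 := by
  rw [hasDerivAt_iff_tendsto_slope] at h
  refine tendsto_nhds_unique (tendsto_rhoQuot_rhoMinus x y) ?_
  rw [funext (rhoQuot_eq_slope x y)]
  exact (h.div_const 2).mono_left (nhdsLT_le_nhdsNE 0)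

theorem hasDerivAt_norm_add_smul_sq {x y : X} {t : ℝ}
    (h : rhoMinus (x + t • y) y = rhoPlus (x + t • y) y) :
    HasDerivAt (fun s : ℝ => ‖x + s • y‖ ^ 2) (2 * rhoPlus (x + t • y) y) t := by
  set w := x + t • y
  have hw : HasDerivAt (fun s : ℝ => ‖w + s • y‖ ^ 2) (2 * rhoPlus w y) (t - t) := by
    rw [sub_self, hasDerivAt_iff_tendsto_slope, ← nhdsLT_sup_nhdsGT, tendsto_sup]
    have hslope : slope (fun s : ℝ => ‖w + s • y‖ ^ 2) 0 = fun s => 2 * rhoQuot w y s := by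
      funext s
      rw [rhoQuot_eq_slope]
      ring
    rw [hslope]
    exact ⟨h ▸ (tendsto_rhoQuot_rhoMinus w y).const_mul 2,
      (tendsto_rhoQuot_rhoPlus w y).const_mul 2⟩
  have hline : (fun s : ℝ => ‖x + s • y‖ ^ 2) = fun s => ‖w + (s - t) • y‖ ^ 2 := by
    funext s
    congr 2
    module
  rw [hline]
  exact hw.comp_sub_const t t

end NormDerivatives

section RhoStar

variable {X Y : Type*} [NormedAddCommGroup X] [NormedSpace ℝ X]
  [NormedAddCommGroup Y] [NormedSpace ℝ Y]

theorem rhoStar_smul_add_eq_zero {x : X} (hx : x ≠ 0) (y : X) :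
    rhoStar x ((-rhoPlus x y / ‖x‖ ^ 2) • x + y) = 0 := by
  rw [rhoStar, rhoPlus_smul_add, div_mul_cancel₀ _ (pow_ne_zero 2 (norm_ne_zero_iff.2 hx)),
    neg_add_cancel, mul_zero]

theorem rhoStar_smul_self (x : X) (a : ℝ) : rhoStar x (a • x) = (a * ‖x‖ ^ 2) ^ 2 := by
  rw [rhoStar, ← add_zero (a • x), rhoPlus_smul_add, rhoMinus_smul_add, rhoPlus_zero_right,
    rhoMinus_eq_neg_rhoPlus_neg x 0, neg_zero, rhoPlus_zero_right]
  ring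

theorem rhoPlus_nonneg_of_rhoStar_eq_zero {x y : X} (h : rhoStar x y = 0) : 0 ≤ rhoPlus x y := by
  rcases mul_eq_zero.1 h with h | h
  · exact h ▸ rhoMinus_le_rhoPlus x y
  · exact h.ge

theorem rhoMinus_nonpos_of_rhoStar_eq_zero {x y : X} (h : rhoStar x y = 0) :
    rhoMinus x y ≤ 0 := by
  rcases mul_eq_zero.1 h with h | h
  · exact h.le
  · exact h ▸ rhoMinus_le_rhoPlus x y

/-- On a line, `ρ₊ ≥ 0` at the left end and `ρ₋ ≤ 0` at the right end squeeze the secant slope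
of the convex function `t ↦ ‖x + t • y‖²` to `0`. -/
theorem norm_add_smul_eq_of_rhoStar_eq_zero {x y : X} {s t : ℝ} (hst : s < t)
    (hs : rhoStar (x + s • y) y = 0) (ht : rhoStar (x + t • y) y = 0) :
    ‖x + s • y‖ = ‖x + t • y‖ := by
  have hslope_nonneg : 0 ≤ slope (fun r : ℝ => ‖x + r • y‖ ^ 2) s t / 2 := by
    rw [← rhoQuot_add_smul]
    exact (rhoPlus_nonneg_of_rhoStar_eq_zero hs).trans (rhoPlus_le_rhoQuot _ _ (sub_pos.2 hst))
  have hslope_nonpos : slope (fun r : ℝ => ‖x + r • y‖ ^ 2) s t / 2 ≤ 0 := by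
    rw [slope_comm, ← rhoQuot_add_smul]
    exact (rhoQuot_le_rhoMinus _ _ (sub_neg.2 hst)).trans (rhoMinus_nonpos_of_rhoStar_eq_zero ht)
  have hslope : slope (fun r : ℝ => ‖x + r • y‖ ^ 2) s t = 0 := by linarith
  rw [slope_def_field, div_eq_zero_iff, sub_eq_zero, sub_eq_zero] at hslope
  exact (sq_eq_sq₀ (norm_nonneg _) (norm_nonneg _)).1 (hslope.resolve_right hst.ne').symm

theorem rhoStar_add_smul_eq_zero_of_norm_eq_on {x y : X} {a b c t : ℝ} (hab : a < b)
    (hc : ∀ s ∈ Icc a b, ‖x + s • y‖ = c) (ht : t ∈ Icc a b) : rhoStar (x + t • y) y = 0 := by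
  have hquot : ∀ r, t + r ∈ Icc a b → rhoQuot (x + t • y) y r = 0 := by
    intro r hr
    rw [rhoQuot, add_assoc, ← add_smul, hc _ hr, hc _ ht, sub_self, zero_div]
  rcases ht.2.lt_or_eq with htb | rfl
  · rw [rhoStar, rhoPlus_eq_of_eventually_rhoQuot_eq (c := 0), mul_zero]
    filter_upwards [Ioo_mem_nhdsGT (sub_pos.2 htb)] with r hr
    exact hquot r ⟨by linarith [ht.1, hr.1], by linarith [hr.2]⟩
  · rw [rhoStar, rhoMinus_eq_of_eventually_rhoQuot_eq (c := 0), zero_mul]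
    filter_upwards [Ioo_mem_nhdsLT (sub_neg.2 hab)] with r hr
    exact hquot r ⟨by linarith [hr.1], by linarith [hr.2]⟩

theorem rhoPlus_eq_zero_of_map_eq_zero (T : X →ₗ[ℝ] Y)
    (hpres : ∀ x y : X, rhoStar x y = 0 → rhoStar (T x) (T y) = 0) {w z : X}
    (hw : T w ≠ 0) (hz : T z = 0) : rhoPlus w z = 0 := by
  have hw0 : w ≠ 0 := fun h => hw (by rw [h, map_zero])
  have h := hpres _ _ (rhoStar_smul_add_eq_zero hw0 z)
  rw [map_add, map_smul, hz, add_zero, rhoStar_smul_self] at h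
  simpa [hw, hw0] using h

/-- If `T z = 0` with `z ≠ 0`, then `ρ₊(w, z) = 0` along the whole line `x₀ + ℝ z` through a point
with `T x₀ ≠ 0`, so `t ↦ ‖x₀ + t • z‖` is nondecreasing, although it tends to `∞` as `t → -∞`. -/
theorem injective_of_rhoStar_preserving (T : X →ₗ[ℝ] Y) (hT : T ≠ 0)
    (hpres : ∀ x y : X, rhoStar x y = 0 → rhoStar (T x) (T y) = 0) : Function.Injective T := by
  refine (injective_iff_map_eq_zero T).2 fun z hz => ?_
  by_contra hz0
  obtain ⟨x₀, hx₀⟩ : ∃ x₀, T x₀ ≠ 0 := by simpa using DFunLike.ne_iff.1 hT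
  have hbound : ∀ s : ℝ, 0 < s → ‖x₀ - s • z‖ ≤ ‖x₀‖ := by
    intro s hs
    have h := rhoPlus_le_rhoQuot (x₀ - s • z) z hs
    rw [rhoPlus_eq_zero_of_map_eq_zero T hpres (by simpa [hz] using hx₀) hz, rhoQuot,
      sub_add_cancel, le_div_iff₀ (by positivity), zero_mul, sub_nonneg] at h
    exact (sq_le_sq₀ (norm_nonneg _) (norm_nonneg _)).1 h
  have hzpos : 0 < ‖z‖ := norm_pos_iff.2 hz0
  have hfar : ‖((2 * ‖x₀‖ + 1) / ‖z‖) • z‖ = 2 * ‖x₀‖ + 1 := by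
    rw [norm_smul, Real.norm_of_nonneg (by positivity), div_mul_cancel₀ _ hzpos.ne']
  have htri := norm_sub_norm_le (((2 * ‖x₀‖ + 1) / ‖z‖) • z) x₀
  rw [norm_sub_rev] at htri
  linarith [hbound ((2 * ‖x₀‖ + 1) / ‖z‖) (by positivity)]

theorem norm_add_smul_sub_eq_one {u v : X} (hu : ‖u‖ = 1) (hv : ‖v‖ = 1)
    (hm : 1 ≤ ‖(1 / 2 : ℝ) • (u + v)‖) {s : ℝ} (hs : s ∈ Icc (0 : ℝ) 1) :
    ‖u + s • (v - u)‖ = 1 := by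
  have hle : ∀ r ∈ Icc (0 : ℝ) 1, ‖u + r • (v - u)‖ ≤ 1 := by
    intro r hr
    calc ‖u + r • (v - u)‖ = ‖(1 - r) • u + r • v‖ := by congr 1; module
      _ ≤ ‖(1 - r) • u‖ + ‖r • v‖ := norm_add_le _ _
      _ = 1 := by
        rw [norm_smul, norm_smul, hu, hv, Real.norm_of_nonneg (sub_nonneg.2 hr.2),
          Real.norm_of_nonneg hr.1]
        ring
  have hmid : (1 / 2 : ℝ) • (u + v) =
      (1 / 2 : ℝ) • (u + s • (v - u)) + (1 / 2 : ℝ) • (u + (1 - s) • (v - u)) := by module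
  have htri : ‖(1 / 2 : ℝ) • (u + v)‖ ≤
      1 / 2 * ‖u + s • (v - u)‖ + 1 / 2 * ‖u + (1 - s) • (v - u)‖ := by
    rw [hmid]
    refine (norm_add_le _ _).trans_eq ?_
    rw [norm_smul, norm_smul, Real.norm_of_nonneg (by norm_num)]
  linarith [hle s hs, hle (1 - s) ⟨by linarith [hs.2], by linarith [hs.1]⟩]

theorem strictConvexSpace_iff_norm_midpoint_lt_one :
    StrictConvexSpace ℝ X ↔
      ∀ u v : X, ‖u‖ = 1 → ‖v‖ = 1 → u ≠ v → ‖(1 / 2 : ℝ) • (u + v)‖ < 1 := by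
  refine ⟨fun _ u v hu hv huv => hu ▸ (norm_midpoint_lt_iff (hu.trans hv.symm)).2 huv,
    fun h => StrictConvexSpace.of_norm_add_ne_two fun u v hu hv huv h2 => ?_⟩
  have := h u v hu hv huv
  rw [norm_smul, h2] at this
  norm_num at this

theorem strictConvexSpace_of_rhoStar_preserving [StrictConvexSpace ℝ Y] (T : X →ₗ[ℝ] Y)
    (hT : Function.Injective T)
    (hpres : ∀ x y : X, rhoStar x y = 0 → rhoStar (T x) (T y) = 0) : StrictConvexSpace ℝ X := by
  refine strictConvexSpace_iff_norm_midpoint_lt_one.2 fun u v hu hv huv => ?_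
  by_contra! hm
  have hY : ∀ s ∈ Icc (0 : ℝ) 1, rhoStar (T u + s • T (v - u)) (T (v - u)) = 0 := by
    intro s hs
    have h := hpres _ _ (rhoStar_add_smul_eq_zero_of_norm_eq_on zero_lt_one
      (fun r hr => norm_add_smul_sub_eq_one hu hv hm hr) hs)
    rwa [map_add, map_smul] at h
  have h₁ := norm_add_smul_eq_of_rhoStar_eq_zero (by norm_num : (0 : ℝ) < 1 / 2)
    (hY 0 (by norm_num)) (hY (1 / 2) (by norm_num))
  have h₂ := norm_add_smul_eq_of_rhoStar_eq_zero (by norm_num : (1 / 2 : ℝ) < 1)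
    (hY (1 / 2) (by norm_num)) (hY 1 (by norm_num))
  have hmid : T u + (1 / 2 : ℝ) • T (v - u) = (1 / 2 : ℝ) • (T u + T v) := by
    rw [map_sub]; module
  have hend : T u + (1 : ℝ) • T (v - u) = T v := by rw [map_sub]; module
  rw [zero_smul, add_zero, hmid] at h₁
  rw [hmid, hend] at h₂
  exact ((norm_midpoint_lt_iff (h₁.trans h₂)).2 (hT.ne huv)).ne' h₁

end RhoStar

open scoped InnerProductSpace

section InnerProduct

variable {X Y : Type*} [NormedAddCommGroup X] [NormedSpace ℝ X]
  [NormedAddCommGroup Y] [InnerProductSpace ℝ Y]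

theorem exists_inner_iff_parallelogram_law :
    (∃ inner : X → X → ℝ,
        (∀ u v : X, inner u v = inner v u) ∧
        (∀ (a : ℝ) (u v w : X), inner (a • u + v) w = a * inner u w + inner v w) ∧
        (∀ u : X, inner u u = ‖u‖ ^ 2)) ↔
      ∀ x y : X, ‖x + y‖ * ‖x + y‖ + ‖x - y‖ * ‖x - y‖ = 2 * (‖x‖ * ‖x‖ + ‖y‖ * ‖y‖) := by
  constructor
  · rintro ⟨inner, hsymm, hlin, hnorm⟩ x y
    have hzero : ∀ w, inner 0 w = 0 := fun w => by
      have h := hlin 1 0 0 w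
      rw [one_smul, add_zero, one_mul] at h
      linarith
    have hsmul : ∀ (a : ℝ) (u w : X), inner (a • u) w = a * inner u w := fun a u w => by
      simpa [hzero] using hlin a u 0 w
    have hadd : ∀ u v w : X, inner (u + v) w = inner u w + inner v w := fun u v w => by
      simpa using hlin 1 u v w
    have hexpand : ∀ a : ℝ, ‖x + a • y‖ ^ 2 = ‖x‖ ^ 2 + 2 * a * inner x y + a ^ 2 * ‖y‖ ^ 2 := by
      intro a
      rw [← hnorm, ← hnorm, ← hnorm, hadd, hsmul, hsymm x (x + a • y), hsymm y (x + a • y),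
        hadd, hadd, hsmul, hsmul, hsymm y x]
      ring
    have hplus := hexpand 1
    have hminus := hexpand (-1)
    rw [one_smul] at hplus
    rw [neg_one_smul, ← sub_eq_add_neg] at hminus
    linear_combination hplus + hminus
  · intro h
    let _ := InnerProductSpace.ofNorm ℝ h
    exact ⟨fun u v => ⟪u, v⟫_ℝ, fun u v => real_inner_comm v u,
      fun a u v w => by simp only [inner_add_left, real_inner_smul_left],
      real_inner_self_eq_norm_sq⟩

theorem hasDerivAt_norm_add_smul_sq_zero (x y : Y) :
    HasDerivAt (fun t : ℝ => ‖x + t • y‖ ^ 2) (2 * ⟪x, y⟫_ℝ) 0 := by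
  simpa using (((hasDerivAt_id (0 : ℝ)).smul_const y).const_add x).norm_sq

theorem rhoPlus_eq_inner (x y : Y) : rhoPlus x y = ⟪x, y⟫_ℝ := by
  rw [rhoPlus_eq_of_hasDerivAt (hasDerivAt_norm_add_smul_sq_zero x y),
    mul_div_cancel_left₀ _ two_ne_zero]

theorem rhoMinus_eq_inner (x y : Y) : rhoMinus x y = ⟪x, y⟫_ℝ := by
  rw [rhoMinus_eq_of_hasDerivAt (hasDerivAt_norm_add_smul_sq_zero x y),
    mul_div_cancel_left₀ _ two_ne_zero]

theorem rhoStar_eq_inner_sq (x y : Y) : rhoStar x y = ⟪x, y⟫_ℝ ^ 2 := by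
  rw [rhoStar, rhoPlus_eq_inner, rhoMinus_eq_inner, sq]

theorem inner_map_mul_norm_sq_eq_rhoPlus_mul (T : X →ₗ[ℝ] Y)
    (hpres : ∀ x y : X, rhoStar x y = 0 → rhoStar (T x) (T y) = 0) {x : X} (hx : x ≠ 0)
    (y : X) : ⟪T x, T y⟫_ℝ * ‖x‖ ^ 2 = rhoPlus x y * ‖T x‖ ^ 2 := by
  have h := hpres _ _ (rhoStar_smul_add_eq_zero hx y)
  rw [rhoStar_eq_inner_sq, map_add, map_smul, inner_add_right, real_inner_smul_right,
    real_inner_self_eq_norm_sq, sq_eq_zero_iff] at h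
  field_simp at h
  linarith

theorem rhoMinus_eq_rhoPlus_of_rhoStar_preserving (T : X →ₗ[ℝ] Y) (hT : Function.Injective T)
    (hpres : ∀ x y : X, rhoStar x y = 0 → rhoStar (T x) (T y) = 0) {x : X} (hx : x ≠ 0)
    (y : X) : rhoMinus x y = rhoPlus x y := by
  have hplus := inner_map_mul_norm_sq_eq_rhoPlus_mul T hpres hx y
  have hneg := inner_map_mul_norm_sq_eq_rhoPlus_mul T hpres hx (-y)
  rw [map_neg, inner_neg_right] at hneg
  have hTx : ‖T x‖ ^ 2 ≠ 0 := pow_ne_zero 2 (norm_ne_zero_iff.2 ((map_ne_zero_iff T hT).2 hx))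
  refine mul_right_cancel₀ hTx ?_
  linear_combination ‖T x‖ ^ 2 * rhoMinus_eq_neg_rhoPlus_neg x y + hneg + hplus

/-- Along a line avoiding `0`, the numerator and denominator of `‖T w‖² / ‖w‖²` have derivatives
`2 ⟪T w, T y⟫` and `2 ρ₊(w, y)`, in the same proportion as themselves. -/
theorem norm_map_sq_div_norm_sq_add_smul_eq (T : X →ₗ[ℝ] Y) (hT : Function.Injective T)
    (hpres : ∀ x y : X, rhoStar x y = 0 → rhoStar (T x) (T y) = 0) {x y : X}
    (hline : ∀ t : ℝ, x + t • y ≠ 0) (t : ℝ) :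
    ‖T (x + t • y)‖ ^ 2 / ‖x + t • y‖ ^ 2 = ‖T x‖ ^ 2 / ‖x‖ ^ 2 := by
  set G := fun t : ℝ => ‖T (x + t • y)‖ ^ 2 / ‖x + t • y‖ ^ 2
  have hG : ∀ s, HasDerivAt G 0 s := by
    intro s
    have hnum : HasDerivAt (fun r : ℝ => ‖T (x + r • y)‖ ^ 2)
        (2 * ⟪T (x + s • y), T y⟫_ℝ) s := by
      simpa using (((hasDerivAt_id s).smul_const (T y)).const_add (T x)).norm_sq
    have hden := hasDerivAt_norm_add_smul_sq
      (rhoMinus_eq_rhoPlus_of_rhoStar_preserving T hT hpres (hline s) y)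
    refine (hnum.div hden (pow_ne_zero 2 (norm_ne_zero_iff.2 (hline s)))).congr_deriv ?_
    rw [div_eq_zero_iff]
    left
    linear_combination 2 * inner_map_mul_norm_sq_eq_rhoPlus_mul T hpres (hline s) y
  have := is_const_of_deriv_eq_zero (fun s => (hG s).differentiableAt) (fun s => (hG s).deriv) t 0
  simpa [G] using this

theorem norm_map_mul_norm_eq (T : X →ₗ[ℝ] Y) (hT : Function.Injective T)
    (hpres : ∀ x y : X, rhoStar x y = 0 → rhoStar (T x) (T y) = 0) (x x' : X) :
    ‖T x‖ * ‖x'‖ = ‖T x'‖ * ‖x‖ := by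
  by_cases hline : ∀ t : ℝ, x + t • (x' - x) ≠ 0
  · have h := norm_map_sq_div_norm_sq_add_smul_eq T hT hpres hline 1
    have hx : x ≠ 0 := by simpa using hline 0
    have hx' : x' ≠ 0 := by simpa using hline 1
    rw [one_smul, add_sub_cancel, div_eq_div_iff (pow_ne_zero 2 (norm_ne_zero_iff.2 hx'))
      (pow_ne_zero 2 (norm_ne_zero_iff.2 hx))] at h
    refine (sq_eq_sq₀ (by positivity) (by positivity)).1 ?_
    linear_combination -h
  · obtain ⟨t, ht⟩ : ∃ t : ℝ, x + t • (x' - x) = 0 := by simpa using hline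
    have hdep : (1 - t) • x = (-t) • x' := by
      rw [← sub_eq_zero, ← ht]
      module
    have hn := congrArg norm hdep
    have hTn := congrArg (fun v => ‖T v‖) hdep
    simp only [map_smul, norm_smul, Real.norm_eq_abs, abs_neg] at hn hTn
    rcases eq_or_ne t 0 with rfl | ht0
    · rw [zero_smul, add_zero] at ht
      simp [ht]
    · refine mul_left_cancel₀ (abs_ne_zero.2 ht0) ?_
      linear_combination (-‖T x‖) * hn + ‖x‖ * hTn

theorem exists_pos_norm_map_eq_mul_norm (T : X →ₗ[ℝ] Y) (hT : T ≠ 0)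
    (hpres : ∀ x y : X, rhoStar x y = 0 → rhoStar (T x) (T y) = 0) :
    ∃ c > 0, ∀ x, ‖T x‖ = c * ‖x‖ := by
  obtain ⟨x₀, hx₀⟩ : ∃ x₀, T x₀ ≠ 0 := by simpa using DFunLike.ne_iff.1 hT
  have hx₀0 : x₀ ≠ 0 := fun h => hx₀ (by rw [h, map_zero])
  refine ⟨‖T x₀‖ / ‖x₀‖, div_pos (norm_pos_iff.2 hx₀) (norm_pos_iff.2 hx₀0), fun x => ?_⟩
  rw [div_mul_eq_mul_div, eq_div_iff (norm_ne_zero_iff.2 hx₀0)]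
  exact norm_map_mul_norm_eq T (injective_of_rhoStar_preserving T hT hpres) hpres x x₀

theorem parallelogram_law_of_rhoStar_preserving (T : X →ₗ[ℝ] Y) (hT : T ≠ 0)
    (hpres : ∀ x y : X, rhoStar x y = 0 → rhoStar (T x) (T y) = 0) (x y : X) :
    ‖x + y‖ * ‖x + y‖ + ‖x - y‖ * ‖x - y‖ = 2 * (‖x‖ * ‖x‖ + ‖y‖ * ‖y‖) := by
  obtain ⟨c, hc, hTc⟩ := exists_pos_norm_map_eq_mul_norm T hT hpres
  have h := parallelogram_law_with_norm_mul ℝ (T x) (T y)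
  rw [← map_add, ← map_sub, hTc, hTc, hTc, hTc] at h
  refine mul_left_cancel₀ (mul_ne_zero hc.ne' hc.ne') ?_
  linear_combination h

end InnerProduct

theorem strictConvex_and_inner_transfer_general {X Y : Type*} [NormedAddCommGroup X]
    [NormedSpace ℝ X] [NormedAddCommGroup Y] [NormedSpace ℝ Y]
    (T : X →ₗ[ℝ] Y) (hT : T ≠ 0)
    (hpres : ∀ x y : X, rhoStar x y = 0 → rhoStar (T x) (T y) = 0) :
    ((∀ u v : Y, ‖u‖ = 1 → ‖v‖ = 1 → u ≠ v → ‖(1 / 2 : ℝ) • (u + v)‖ < 1) →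
      (∀ u v : X, ‖u‖ = 1 → ‖v‖ = 1 → u ≠ v → ‖(1 / 2 : ℝ) • (u + v)‖ < 1)) ∧
    ((∃ inner : Y → Y → ℝ,
        (∀ u v : Y, inner u v = inner v u) ∧
        (∀ (a : ℝ) (u v w : Y), inner (a • u + v) w = a * inner u w + inner v w) ∧
        (∀ u : Y, inner u u = ‖u‖ ^ 2)) →
      (∃ inner : X → X → ℝ,
        (∀ u v : X, inner u v = inner v u) ∧
        (∀ (a : ℝ) (u v w : X), inner (a • u + v) w = a * inner u w + inner v w) ∧
        (∀ u : X, inner u u = ‖u‖ ^ 2))) := by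
  refine ⟨fun hY => ?_, fun hY => ?_⟩
  · have : StrictConvexSpace ℝ Y := strictConvexSpace_iff_norm_midpoint_lt_one.2 hY
    exact strictConvexSpace_iff_norm_midpoint_lt_one.1 <|
      strictConvexSpace_of_rhoStar_preserving T (injective_of_rhoStar_preserving T hT hpres) hpres
  · let _ : InnerProductSpace ℝ Y :=
      InnerProductSpace.ofNorm ℝ (exists_inner_iff_parallelogram_law.1 hY)
    exact exists_inner_iff_parallelogram_law.2 (parallelogram_law_of_rhoStar_preserving T hT hpres)

theorem strictConvex_and_inner_transfer {X Y : Type*} [NormedAddCommGroup X]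
    [NormedSpace ℝ X] [NormedAddCommGroup Y] [NormedSpace ℝ Y]
    (hdim : 2 ≤ Module.rank ℝ X) (T : X →ₗ[ℝ] Y) (hT : T ≠ 0)
    (hpres : ∀ x y : X, rhoStar x y = 0 → rhoStar (T x) (T y) = 0) :
    ((∀ u v : Y, ‖u‖ = 1 → ‖v‖ = 1 → u ≠ v → ‖(1 / 2 : ℝ) • (u + v)‖ < 1) →
      (∀ u v : X, ‖u‖ = 1 → ‖v‖ = 1 → u ≠ v → ‖(1 / 2 : ℝ) • (u + v)‖ < 1)) ∧
    ((∃ inner : Y → Y → ℝ,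
        (∀ u v : Y, inner u v = inner v u) ∧
        (∀ (a : ℝ) (u v w : Y), inner (a • u + v) w = a * inner u w + inner v w) ∧
        (∀ u : Y, inner u u = ‖u‖ ^ 2)) →
      (∃ inner : X → X → ℝ,
        (∀ u v : X, inner u v = inner v u) ∧
        (∀ (a : ℝ) (u v w : X), inner (a • u + v) w = a * inner u w + inner v w) ∧
        (∀ u : X, inner u u = ‖u‖ ^ 2))) :=
  strictConvex_and_inner_transfer_general T hT hpres
end

section
/- Let X and Y be real normed spaces with X of dimension at least 2, and let T : X → Y be a nonzero linear mapping such that for all x,y ∈ X, x ⊥_I y implies Tx ⊥_{ρ*} Ty. Then (1/3)·‖T‖·‖x‖ ≤ ‖Tx‖ ≤ 3·[T]·‖x‖ for all x ∈ X, where ‖T‖ is the operator norm of T and [T] := inf{‖Tx‖ : x ∈ X, ‖x‖ = 1}. -/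
open Filter Topology

/-- `[T] := inf {‖T x‖ : ‖x‖ = 1}`. -/
noncomputable def infNorm {X Y : Type*} [NormedAddCommGroup X] [NormedSpace ℝ X]
    [NormedAddCommGroup Y] [NormedSpace ℝ Y] (T : X →ₗ[ℝ] Y) : ℝ :=
  sInf {c : ℝ | ∃ x : X, ‖x‖ = 1 ∧ c = ‖T x‖}

/-! The function `t ↦ ‖x + t • y‖` is convex, so it has one-sided derivatives at `0`, and
`ρ±(x, y) = ‖x‖ · (its left/right derivative)`. If `‖x‖ = ‖y‖` then `x + y ⊥_I x − y`, so
`ρ*(u, u − 2 T y) = 0` for `u = T (x + y)`. By the triangle inequality every slope at `0` of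
`t ↦ ‖u + t • (u − 2 T y)‖ = ‖(1 + t) u − 2t T y‖` (for `t > −1`) is at least `‖u‖ − 2 ‖T y‖`, so
one of its one-sided derivatives vanishing gives `‖T (x + y)‖ ≤ 2 ‖T y‖`, hence `‖T x‖ ≤ 3 ‖T y‖` for vectors of equal norm;
both bounds follow by rescaling to the unit sphere. -/

open Set

section NormDerivative

variable {Y : Type*} [NormedAddCommGroup Y] [NormedSpace ℝ Y]

theorem convexOn_norm_add_smul (x y : Y) : ConvexOn ℝ univ (fun t : ℝ => ‖x + t • y‖) := by
  have := (convexOn_norm (E := Y) convex_univ).comp_affineMap (AffineMap.lineMap x (x + y))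
  simpa [Function.comp_def, AffineMap.lineMap_apply_module', add_comm] using this

theorem tendsto_normSq_quotient {x y : Y} {s : Set ℝ} (hs : (0 : ℝ) ∉ s) {d : ℝ}
    (hd : HasDerivWithinAt (fun t : ℝ => ‖x + t • y‖) d s 0) :
    Tendsto (fun t : ℝ => (‖x + t • y‖ ^ 2 - ‖x‖ ^ 2) / (2 * t)) (𝓝[s] 0) (𝓝 (‖x‖ * d)) := by
  have hsq := (hasDerivWithinAt_iff_tendsto_slope' hs).mp (hd.pow 2)
  convert hsq.div_const 2 using 2 with t
  · simp only [slope_def_field, Pi.pow_apply, zero_smul, add_zero, sub_zero]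
    ring
  · simp only [Nat.cast_ofNat, zero_smul, add_zero, Nat.add_one_sub_one, pow_one]
    ring

theorem rhoPlus_eq_mul_derivWithin (x y : Y) :
    rhoPlus x y = ‖x‖ * derivWithin (fun t : ℝ => ‖x + t • y‖) (Ioi 0) 0 :=
  (tendsto_normSq_quotient self_notMem_Ioi
    ((convexOn_norm_add_smul x y).hasDerivWithinAt_rightDeriv_of_mem_interior
      (by simp))).limUnder_eq

theorem rhoMinus_eq_mul_derivWithin (x y : Y) :
    rhoMinus x y = ‖x‖ * derivWithin (fun t : ℝ => ‖x + t • y‖) (Iio 0) 0 :=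
  (tendsto_normSq_quotient self_notMem_Iio
    ((convexOn_norm_add_smul x y).hasDerivWithinAt_leftDeriv_of_mem_interior
      (by simp))).limUnder_eq

theorem sub_two_mul_norm_le_slope (u b : Y) {t : ℝ} (ht : -1 < t) (ht0 : t ≠ 0) :
    ‖u‖ - 2 * ‖b‖ ≤ slope (fun t : ℝ => ‖u + t • (u - (2 : ℝ) • b)‖) 0 t := by
  have hvec : u + t • (u - (2 : ℝ) • b) = (1 + t) • u - (2 * t) • b := by module
  have hu : ‖(1 + t) • u‖ = (1 + t) * ‖u‖ := by
    rw [norm_smul, Real.norm_of_nonneg (by linarith)]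
  simp only [slope_def_field, zero_smul, add_zero, sub_zero, hvec]
  rcases ht0.lt_or_gt with hneg | hpos
  · have hle := norm_sub_le ((1 + t) • u) ((2 * t) • b)
    rw [hu, norm_smul, Real.norm_of_nonpos (by linarith)] at hle
    rw [le_div_iff_of_neg hneg]
    nlinarith
  · have hge := norm_sub_norm_le ((1 + t) • u) ((2 * t) • b)
    rw [hu, norm_smul, Real.norm_of_nonneg (by linarith)] at hge
    rw [le_div_iff₀ hpos]
    nlinarith

theorem norm_le_two_mul_of_rhoStar_eq_zero (u b : Y) (h : rhoStar u (u - (2 : ℝ) • b) = 0) :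
    ‖u‖ ≤ 2 * ‖b‖ := by
  set f : ℝ → ℝ := fun t => ‖u + t • (u - (2 : ℝ) • b)‖
  have hconv := convexOn_norm_add_smul u (u - (2 : ℝ) • b)
  have hplus : ‖u‖ - 2 * ‖b‖ ≤ derivWithin f (Ioi 0) 0 :=
    ge_of_tendsto ((hasDerivWithinAt_iff_tendsto_slope' self_notMem_Ioi).mp
      (hconv.hasDerivWithinAt_rightDeriv_of_mem_interior (by simp)))
      (eventually_nhdsWithin_of_forall fun t (ht : 0 < t) =>
        sub_two_mul_norm_le_slope u b (by linarith) ht.ne')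
  have hminus : ‖u‖ - 2 * ‖b‖ ≤ derivWithin f (Iio 0) 0 := by
    refine ge_of_tendsto ((hasDerivWithinAt_iff_tendsto_slope' self_notMem_Iio).mp
      (hconv.hasDerivWithinAt_leftDeriv_of_mem_interior (by simp))) ?_
    filter_upwards [Ioo_mem_nhdsLT (show (-1 : ℝ) < 0 by norm_num)] with t ht
    exact sub_two_mul_norm_le_slope u b ht.1 ht.2.ne
  rw [rhoStar, rhoMinus_eq_mul_derivWithin, rhoPlus_eq_mul_derivWithin] at h
  rcases mul_eq_zero.mp h with h | h <;> rcases mul_eq_zero.mp h with h | h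
  all_goals first | (rw [h]; positivity) | linarith [h]

end NormDerivative

section UnitSphere

variable {X Y : Type*} [NormedAddCommGroup X] [NormedSpace ℝ X] [NormedAddCommGroup Y]
  [NormedSpace ℝ Y] [Nontrivial X] (T : X →ₗ[ℝ] Y)

theorem nonempty_norm_image_unit_sphere : {c : ℝ | ∃ x : X, ‖x‖ = 1 ∧ c = ‖T x‖}.Nonempty :=
  let ⟨x, hx⟩ := exists_norm_eq X zero_le_one
  ⟨_, x, hx, rfl⟩

theorem opNorm_le {C : ℝ} (h : ∀ w : X, ‖w‖ = 1 → ‖T w‖ ≤ C) : opNorm T ≤ C :=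
  csSup_le (nonempty_norm_image_unit_sphere T) (by rintro _ ⟨w, hw, rfl⟩; exact h w hw)

theorem le_infNorm {C : ℝ} (h : ∀ w : X, ‖w‖ = 1 → C ≤ ‖T w‖) : C ≤ infNorm T :=
  le_csInf (nonempty_norm_image_unit_sphere T) (by rintro _ ⟨w, hw, rfl⟩; exact h w hw)

end UnitSphere

section IsoscelesPreserving

variable {X Y : Type*} [NormedAddCommGroup X] [NormedSpace ℝ X] [NormedAddCommGroup Y]
  [NormedSpace ℝ Y] {T : X →ₗ[ℝ] Y}

theorem norm_apply_le_three_mul_of_norm_eq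
    (hpres : ∀ x y : X, ‖x + y‖ = ‖x - y‖ → rhoStar (T x) (T y) = 0) {x y : X} (h : ‖x‖ = ‖y‖) :
    ‖T x‖ ≤ 3 * ‖T y‖ := by
  have horth : ‖(x + y) + (x - y)‖ = ‖(x + y) - (x - y)‖ := by
    rw [add_add_sub_cancel, add_sub_sub_cancel, ← two_smul ℝ x, ← two_smul ℝ y, norm_smul,
      norm_smul, h]
  have hTsub : T (x - y) = T (x + y) - (2 : ℝ) • T y := by
    simp only [map_add, map_sub]
    module
  have hsum := norm_le_two_mul_of_rhoStar_eq_zero (T (x + y)) (T y)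
    (hTsub ▸ hpres _ _ horth)
  calc ‖T x‖ = ‖T (x + y) - T y‖ := by rw [map_add, add_sub_cancel_right]
    _ ≤ ‖T (x + y)‖ + ‖T y‖ := norm_sub_le _ _
    _ ≤ 3 * ‖T y‖ := by linarith

theorem norm_apply_mul_norm_le
    (hpres : ∀ x y : X, ‖x + y‖ = ‖x - y‖ → rhoStar (T x) (T y) = 0) (x y : X) :
    ‖T x‖ * ‖y‖ ≤ 3 * ‖T y‖ * ‖x‖ := by
  have h := norm_apply_le_three_mul_of_norm_eq hpres (x := ‖y‖ • x) (y := ‖x‖ • y)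
    (by rw [norm_smul, norm_smul, norm_norm, norm_norm, mul_comm])
  simp only [map_smul, norm_smul, norm_norm] at h
  linarith

end IsoscelesPreserving

theorem isosceles_to_rhoStar_bounds_general {X Y : Type*} [NormedAddCommGroup X] [NormedSpace ℝ X]
    [NormedAddCommGroup Y] [NormedSpace ℝ Y]
    (T : X →ₗ[ℝ] Y)
    (hpres : ∀ x y : X, ‖x + y‖ = ‖x - y‖ → rhoStar (T x) (T y) = 0) :
    ∀ x : X, (1 / 3) * opNorm T * ‖x‖ ≤ ‖T x‖ ∧ ‖T x‖ ≤ 3 * infNorm T * ‖x‖ := by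
  intro x
  rcases eq_or_ne x 0 with rfl | hx
  · simp
  have : Nontrivial X := nontrivial_of_ne x 0 hx
  have hxpos : 0 < ‖x‖ := norm_pos_iff.mpr hx
  constructor
  · have hop : opNorm T ≤ 3 * ‖T x‖ / ‖x‖ := opNorm_le T fun w hw => by
      rw [le_div_iff₀ hxpos]
      simpa [hw] using norm_apply_mul_norm_le hpres w x
    rw [le_div_iff₀ hxpos] at hop
    linarith
  · have hinf : ‖T x‖ / 3 / ‖x‖ ≤ infNorm T := le_infNorm T fun w hw => by
      rw [div_le_iff₀ hxpos]
      have h := norm_apply_mul_norm_le hpres x w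
      rw [hw, mul_one] at h
      linarith
    rw [div_le_iff₀ hxpos] at hinf
    linarith

theorem isosceles_to_rhoStar_bounds {X Y : Type*} [NormedAddCommGroup X] [NormedSpace ℝ X]
    [NormedAddCommGroup Y] [NormedSpace ℝ Y] (hdim : 2 ≤ Module.rank ℝ X)
    (T : X →ₗ[ℝ] Y) (hT : T ≠ 0)
    (hpres : ∀ x y : X, ‖x + y‖ = ‖x - y‖ → rhoStar (T x) (T y) = 0) :
    ∀ x : X, (1 / 3) * opNorm T * ‖x‖ ≤ ‖T x‖ ∧ ‖T x‖ ≤ 3 * infNorm T * ‖x‖ :=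
  isosceles_to_rhoStar_bounds_general T hpres
end
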